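/- Let U ⊆ ℝⁿ be an open set, let m ≥ 1, and let f₁, …, f_m : U → ℝ be twice continuously differentiable functions that vanish nowhere on U and satisfy Σ_{k=1}^{m} f_k(x)² = 1 for all x ∈ U. Fix two distinct coordinate indices i ≠ j and functions p, q : U → ℝ, and suppose that for every k ∈ {1,…,m} and every x ∈ U the mixed partial derivative satisfies ∂²f_k/∂x_j∂x_i(x) = p(x)·∂f_k/∂x_i(x) + q(x)·∂f_k/∂x_j(x) + 2·f_k(x)^{−1}·∂f_k/∂x_i(x)·∂f_k/∂x_j(x). Then for all x ∈ U one has Σ_{k=1}^{m} f_k(x)·∂f_k/∂x_i(x) = 0 and Σ_{k=1}^{m} ∂f_k/∂x_i(x)·∂f_k/∂x_j(x) = 0. -/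

import Mathlib

/-!
Differentiating `∑ f_k² = 1` in any coordinate direction gives `∑ f_k ∂_a f_k = 0` on `U`.
Differentiating this identity for `a = i` once more in the direction `j` gives
`∑ (f_k ∂_j∂_i f_k + ∂_i f_k ∂_j f_k) = 0`; substituting the PDE, the `p`- and `q`-terms vanish
by the first identity and the `2 f_k⁻¹` term contributes `2 ∑ ∂_i f_k ∂_j f_k`,
leaving `3 ∑ ∂_i f_k ∂_j f_k = 0`.
-/

/-- The partial derivative of `F : (Fin n → ℝ) → ℝ` in the `i`-th coordinate direction. -/
noncomputable def pd {n : ℕ} (i : Fin n) (F : (Fin n → ℝ) → ℝ) (x : Fin n → ℝ) : ℝ :=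
  fderiv ℝ F x (Pi.single i 1)

open Filter Topology

section PartialDerivatives

variable {n : ℕ} {ι : Type*} [Fintype ι]

theorem pd_eq_zero_of_eventuallyEq_const {F : (Fin n → ℝ) → ℝ} {x : Fin n → ℝ} {c : ℝ}
    (h : F =ᶠ[𝓝 x] fun _ => c) (a : Fin n) : pd a F x = 0 := by
  simp [pd, h.fderiv_eq]

theorem pd_sum_mul {F G : ι → (Fin n → ℝ) → ℝ} {x : Fin n → ℝ}
    (hF : ∀ k, DifferentiableAt ℝ (F k) x) (hG : ∀ k, DifferentiableAt ℝ (G k) x) (a : Fin n) :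
    pd a (fun z => ∑ k, F k z * G k z) x =
      ∑ k, (F k x * pd a (G k) x + G k x * pd a (F k) x) := by
  have h := HasFDerivAt.fun_sum (u := Finset.univ) fun k _ =>
    (hF k).hasFDerivAt.fun_mul (hG k).hasFDerivAt
  simp [pd, h.fderiv]

theorem sum_mul_pd_add_eq_zero_of_eventuallyEq_const {F G : ι → (Fin n → ℝ) → ℝ}
    {x : Fin n → ℝ} {c : ℝ}
    (hF : ∀ k, DifferentiableAt ℝ (F k) x) (hG : ∀ k, DifferentiableAt ℝ (G k) x)
    (hc : (fun z => ∑ k, F k z * G k z) =ᶠ[𝓝 x] fun _ => c) (a : Fin n) :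
    ∑ k, (F k x * pd a (G k) x + G k x * pd a (F k) x) = 0 := by
  rw [← pd_sum_mul hF hG a]
  exact pd_eq_zero_of_eventuallyEq_const hc a

theorem ContDiffAt.differentiableAt_pd {F : (Fin n → ℝ) → ℝ} {x : Fin n → ℝ}
    (hF : ContDiffAt ℝ 2 F x) (a : Fin n) : DifferentiableAt ℝ (pd a F) x :=
  ((hF.fderiv_right (m := 1) le_rfl).differentiableAt one_ne_zero).clm_apply
    (differentiableAt_const _)

theorem sum_mul_pd_eq_zero_of_sum_sq_eq_one {f : ι → (Fin n → ℝ) → ℝ} {U : Set (Fin n → ℝ)}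
    (hU : IsOpen U) (hf : ∀ k, DifferentiableOn ℝ (f k) U)
    (hsum : ∀ x ∈ U, ∑ k, f k x ^ 2 = 1) (a : Fin n) {x : Fin n → ℝ} (hx : x ∈ U) :
    ∑ k, f k x * pd a (f k) x = 0 := by
  have hd k : DifferentiableAt ℝ (f k) x := (hf k).differentiableAt (hU.mem_nhds hx)
  have h := sum_mul_pd_add_eq_zero_of_eventuallyEq_const hd hd (c := 1)
    (eventually_of_mem (hU.mem_nhds hx) fun y hy => by simpa [sq] using hsum y hy) a
  simp only [← two_mul, ← Finset.mul_sum] at h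
  simpa using h

end PartialDerivatives

theorem totally_geodesic_orthogonality_step_general
    (n m : ℕ)
    (U : Set (Fin n → ℝ)) (hUopen : IsOpen U)
    (f : Fin m → (Fin n → ℝ) → ℝ)
    (hC2 : ∀ k : Fin m, ContDiffOn ℝ 2 (f k) U)
    (hnz : ∀ k : Fin m, ∀ x ∈ U, f k x ≠ 0)
    (hsum : ∀ x ∈ U, (∑ k, (f k x) ^ 2) = 1)
    (i j : Fin n)
    (p q : (Fin n → ℝ) → ℝ)
    (hpde : ∀ k : Fin m, ∀ x ∈ U,
      pd j (fun z => pd i (f k) z) x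
        = p x * pd i (f k) x + q x * pd j (f k) x
          + 2 * (f k x)⁻¹ * pd i (f k) x * pd j (f k) x) :
    ∀ x ∈ U, (∑ k, f k x * pd i (f k) x) = 0 ∧
      (∑ k, pd i (f k) x * pd j (f k) x) = 0 := by
  intro x hx
  have horth a {y} (hy : y ∈ U) : ∑ k, f k y * pd a (f k) y = 0 :=
    sum_mul_pd_eq_zero_of_sum_sq_eq_one hUopen
      (fun k => (hC2 k).differentiableOn two_ne_zero) hsum a hy
  refine ⟨horth i hx, ?_⟩
  have hf2 k : ContDiffAt ℝ 2 (f k) x := (hC2 k).contDiffAt (hUopen.mem_nhds hx)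
  have hdiff := sum_mul_pd_add_eq_zero_of_eventuallyEq_const
    (fun k => (hf2 k).differentiableAt two_ne_zero) (fun k => (hf2 k).differentiableAt_pd i)
    (eventually_of_mem (hUopen.mem_nhds hx) fun y hy => horth i hy) j
  have hexpand k : f k x * pd j (pd i (f k)) x + pd i (f k) x * pd j (f k) x =
      p x * (f k x * pd i (f k) x) + q x * (f k x * pd j (f k) x)
        + 3 * (pd i (f k) x * pd j (f k) x) := by
    rw [hpde k x hx]
    field_simp [hnz k x hx]
    ring
  simp only [hexpand, Finset.sum_add_distrib, ← Finset.mul_sum, horth i hx, horth j hx] at hdiff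
  linarith

/-- Intermediate claim in the proof of Theorem 5.1: if `f₁, …, f_m` are nowhere-vanishing
`C²` functions with `∑ f_k² = 1` satisfying the mixed-partial PDE
`∂²f_k/∂x_j∂x_i = p·∂f_k/∂x_i + q·∂f_k/∂x_j + 2 f_k⁻¹ ∂f_k/∂x_i ∂f_k/∂x_j`,
then `∑ f_k ∂f_k/∂x_i = 0` and `∑ (∂f_k/∂x_i)(∂f_k/∂x_j) = 0` on `U`. -/
theorem totally_geodesic_orthogonality_step
    (n m : ℕ) (hm : 1 ≤ m)
    (U : Set (Fin n → ℝ)) (hUopen : IsOpen U)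
    (f : Fin m → (Fin n → ℝ) → ℝ)
    (hC2 : ∀ k : Fin m, ContDiffOn ℝ 2 (f k) U)
    (hnz : ∀ k : Fin m, ∀ x ∈ U, f k x ≠ 0)
    (hsum : ∀ x ∈ U, (∑ k, (f k x) ^ 2) = 1)
    (i j : Fin n) (hij : i ≠ j)
    (p q : (Fin n → ℝ) → ℝ)
    (hpde : ∀ k : Fin m, ∀ x ∈ U,
      pd j (fun z => pd i (f k) z) x
        = p x * pd i (f k) x + q x * pd j (f k) x
          + 2 * (f k x)⁻¹ * pd i (f k) x * pd j (f k) x) :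
    ∀ x ∈ U, (∑ k, f k x * pd i (f k) x) = 0 ∧
      (∑ k, pd i (f k) x * pd j (f k) x) = 0 :=
  totally_geodesic_orthogonality_step_general n m U hUopen f hC2 hnz hsum i j p q hpde
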